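/- arXiv:2102.07895 — 3 statements merged into one kernel-verified Lean document; each statement's English description precedes it below -/
import Mathlib

section
/- For all real numbers a, b with b ≥ 1 and a ≥ (√(2b)+1)², one has 2a/(a+2b−1) ≤ √(a/(2b)); moreover for b ≥ 1 and 1 ≤ a < (√(2b)+1)² with √a > √(2b), the reverse strict inequality 2a/(a+2b−1) > √(a/(2b)) holds. -/
theorem folding_vs_volume_polydisc (a b : ℝ) (hb : 1 ≤ b) :
    (a ≥ (Real.sqrt (2 * b) + 1) ^ 2 →
      2 * a / (a + 2 * b - 1) ≤ Real.sqrt (a / (2 * b))) ∧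
    (1 ≤ a → a < (Real.sqrt (2 * b) + 1) ^ 2 → Real.sqrt (2 * b) < Real.sqrt a →
      2 * a / (a + 2 * b - 1) > Real.sqrt (a / (2 * b))) := by
  set t := Real.sqrt (2 * b) with ht
  have hb0 : (0:ℝ) < 2 * b := by linarith
  have ht2 : t ^ 2 = 2 * b := Real.sq_sqrt hb0.le
  have ht1 : 1 ≤ t := by
    rw [ht, show (1:ℝ) = Real.sqrt 1 by simp]
    exact Real.sqrt_le_sqrt (by linarith)
  constructor
  · intro ha
    have ha0 : 0 ≤ a := le_trans (by positivity) ha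
    set s := Real.sqrt a with hs
    have hs2 : s ^ 2 = a := Real.sq_sqrt ha0
    have hst : t + 1 ≤ s := by
      rw [hs, show t + 1 = Real.sqrt ((t+1)^2) from
        (Real.sqrt_sq (by linarith)).symm]
      exact Real.sqrt_le_sqrt ha
    have hsq : Real.sqrt (a / (2 * b)) = s / t := by
      rw [Real.sqrt_div ha0, ht, hs]
    rw [hsq]
    have hden : 0 < a + 2 * b - 1 := by nlinarith
    have htpos : (0:ℝ) < t := by linarith
    rw [div_le_div_iff₀ hden htpos]
    nlinarith [sq_nonneg (s - t - 1)]
  · intro ha1 ha hts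
    have ha0 : 0 ≤ a := by linarith
    set s := Real.sqrt a with hs
    have hs2 : s ^ 2 = a := Real.sq_sqrt ha0
    have hst : s < t + 1 := by
      rw [hs, show t + 1 = Real.sqrt ((t+1)^2) from
        (Real.sqrt_sq (by linarith)).symm]
      exact Real.sqrt_lt_sqrt ha0 ha
    have hsq : Real.sqrt (a / (2 * b)) = s / t := by
      rw [Real.sqrt_div ha0, ht, hs]
    rw [hsq]
    have hden : 0 < a + 2 * b - 1 := by nlinarith
    have htpos : (0:ℝ) < t := by linarith
    rw [gt_iff_lt, div_lt_div_iff₀ htpos hden]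
    have hspos : 0 < s := lt_trans htpos hts
    nlinarith [sq_nonneg (s - t), mul_pos hspos (sub_pos.mpr hts)]
end

section
/- For a real number a ≥ 1 and integer l ≥ 1, define c^EH_l(a) to be the l-th smallest element (counted with multiplicity) of the multiset {i : i ∈ ℤ_{≥1}} ∪ {j·a : j ∈ ℤ_{≥1}}. Let p, q be positive integers with p + q even, set a = p/q and d = (p+q)/2, and assume a ≥ 1. Then c^EH_{2d−1}(a) = p. -/
noncomputable def cEH (a : ℝ) (l : ℕ) : ℝ :=
  sInf {x : ℝ | 0 < x ∧
    l ≤ Nat.card {i : ℕ // 1 ≤ i ∧ (i : ℝ) ≤ x} +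
        Nat.card {j : ℕ // 1 ≤ j ∧ (j : ℝ) * a ≤ x}}

lemma card_le_aux (x : ℝ) (hx : 0 ≤ x) :
    Nat.card {i : ℕ // 1 ≤ i ∧ (i : ℝ) ≤ x} = ⌊x⌋₊ := by
  have e : {i : ℕ // 1 ≤ i ∧ (i : ℝ) ≤ x} ≃ (Finset.Icc 1 ⌊x⌋₊ : Finset ℕ) :=
    Equiv.subtypeEquivRight (by simp [Nat.le_floor_iff hx])
  rw [Nat.card_congr e, Nat.card_eq_fintype_card, Fintype.card_coe, Nat.card_Icc]; omega

lemma card_mul_le_aux (x a : ℝ) (hx : 0 ≤ x) (ha : 0 < a) :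
    Nat.card {j : ℕ // 1 ≤ j ∧ (j : ℝ) * a ≤ x} = ⌊x / a⌋₊ := by
  have key : ∀ j : ℕ, ((j : ℝ) * a ≤ x) ↔ ((j : ℝ) ≤ x / a) := by
    intro j; rw [le_div_iff₀ ha]
  have e : {j : ℕ // 1 ≤ j ∧ (j : ℝ) * a ≤ x} ≃ (Finset.Icc 1 ⌊x / a⌋₊ : Finset ℕ) :=
    Equiv.subtypeEquivRight (by
      intro j
      simp [key, Nat.le_floor_iff (div_nonneg hx ha.le)])
  rw [Nat.card_congr e, Nat.card_eq_fintype_card, Fintype.card_coe, Nat.card_Icc]; omega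

theorem ekeland_hofer_value (p q d : ℕ) (hp : 0 < p) (hq : 0 < q)
    (hd : p + q = 2 * d) (ha : 1 ≤ (p : ℝ) / q) :
    cEH ((p : ℝ) / q) (2 * d - 1) = p := by
  have hpR : (0 : ℝ) < p := by exact_mod_cast hp
  have hqR : (0 : ℝ) < q := by exact_mod_cast hq
  have haR : (0 : ℝ) < (p : ℝ) / q := div_pos hpR hqR
  set S : Set ℝ := {x : ℝ | 0 < x ∧
    2 * d - 1 ≤ Nat.card {i : ℕ // 1 ≤ i ∧ (i : ℝ) ≤ x} +
        Nat.card {j : ℕ // 1 ≤ j ∧ (j : ℝ) * ((p : ℝ) / q) ≤ x}} with hS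
  have hmem : (p : ℝ) ∈ S := by
    constructor
    · exact hpR
    · rw [card_le_aux _ hpR.le, card_mul_le_aux _ _ hpR.le haR]
      have : (p : ℝ) / ((p : ℝ) / q) = q := by
        field_simp
      rw [this, Nat.floor_natCast, Nat.floor_natCast]
      omega
  have hlb : ∀ y ∈ S, (p : ℝ) ≤ y := by
    intro y hy
    by_contra h
    push_neg at h
    obtain ⟨hy0, hyc⟩ := hy
    rw [card_le_aux _ hy0.le, card_mul_le_aux _ _ hy0.le haR] at hyc
    have h1 : ⌊y⌋₊ < p := by
      rw [Nat.floor_lt hy0.le]; exact h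
    have h2 : ⌊y / ((p : ℝ) / q)⌋₊ < q := by
      rw [Nat.floor_lt (div_nonneg hy0.le haR.le)]
      rw [div_lt_iff₀ haR]
      calc y < p := h
        _ = (q : ℝ) * ((p : ℝ) / q) := by field_simp
    omega
  have : sInf S = p := le_antisymm (csInf_le ⟨(p : ℝ), hlb⟩ hmem) (le_csInf ⟨_, hmem⟩ hlb)
  exact this
end

section
/- Let f : [1,∞) → ℝ be nondecreasing and satisfy the subscaling property f(a') ≤ (a'/a)·f(a) for all 1 ≤ a ≤ a'. Let 1 ≤ a₁ ≤ a₀ ≤ a₂, let m > 0, and let g : [1,∞) → ℝ satisfy g(x) = m·x for x ∈ [a₁, a₀] and g(x) = m·a₀ for x ∈ [a₀, a₂]. If f(x) ≤ g(x) for all x ∈ [a₁, a₂] and f(a₀) = g(a₀) = m·a₀, then f(x) = g(x) for all x ∈ [a₁, a₂]. -/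
theorem step_stabilization (f g : ℝ → ℝ)
    (hmono : ∀ x y : ℝ, 1 ≤ x → x ≤ y → f x ≤ f y)
    (hsub : ∀ a a' : ℝ, 1 ≤ a → a ≤ a' → f a' ≤ (a' / a) * f a)
    (a₁ a₀ a₂ m : ℝ) (h1 : 1 ≤ a₁) (h2 : a₁ ≤ a₀) (h3 : a₀ ≤ a₂) (hm : 0 < m)
    (hg1 : ∀ x : ℝ, a₁ ≤ x → x ≤ a₀ → g x = m * x)
    (hg2 : ∀ x : ℝ, a₀ ≤ x → x ≤ a₂ → g x = m * a₀)
    (hle : ∀ x : ℝ, a₁ ≤ x → x ≤ a₂ → f x ≤ g x)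
    (heq : f a₀ = m * a₀) :
    ∀ x : ℝ, a₁ ≤ x → x ≤ a₂ → f x = g x := by
  intro x hx1 hx2
  rcases le_total x a₀ with hx | hx
  · have hx1' : 1 ≤ x := le_trans h1 hx1
    have hxpos : 0 < x := lt_of_lt_of_le zero_lt_one hx1'
    have hs := hsub x a₀ hx1' hx
    rw [heq] at hs
    have hlow : m * x ≤ f x := by
      by_contra hcon
      push_neg at hcon
      have : (a₀ / x) * f x < (a₀ / x) * (m * x) := by
        apply mul_lt_mul_of_pos_left hcon
        exact div_pos (lt_of_lt_of_le zero_lt_one (le_trans h1 h2)) hxpos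
      have h4 : (a₀ / x) * (m * x) = m * a₀ := by field_simp
      linarith
    have hup : f x ≤ m * x := by
      have := hle x hx1 hx2
      rwa [hg1 x hx1 hx] at this
    rw [hg1 x hx1 hx]; linarith
  · have hlow : m * a₀ ≤ f x := heq ▸ hmono a₀ x (le_trans h1 h2) hx
    have hup : f x ≤ m * a₀ := by
      have := hle x hx1 hx2
      rwa [hg2 x hx hx2] at this
    rw [hg2 x hx hx2]; linarith
end
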